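/- A decision-conflict logit ρ with representation (u,D) is a reciprocal-differences model — i.e. u is injective and there exists λ > 0 with D({a,b}) = λ/|u(a) − u(b)| for all distinct a, b ∈ X — if and only if ρ satisfies axioms A7 and A8. -/

import Mathlib

open Finset

variable {X : Type*} [Fintype X] [DecidableEq X]

/-- The probability of choosing the outside option (deferring) at menu `A`. -/
noncomputable def defer (ρ : Finset X → X → ℝ) (A : Finset X) : ℝ :=
  1 - ∑ a ∈ A, ρ A a

/-- `ρ` is a random non-forced choice model on `X`. -/
def IsRNFC (ρ : Finset X → X → ℝ) : Prop :=
  ∀ A : Finset X, A.Nonempty →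
    (∀ a ∈ A, 0 ≤ ρ A a ∧ ρ A a ≤ 1) ∧
    (∀ a, a ∉ A → ρ A a = 0) ∧
    (∑ a ∈ A, ρ A a) ≤ 1

/-- `ρ` is a decision-conflict logit with representation `(u, D)`. -/
def IsDCL (ρ : Finset X → X → ℝ) (u : X → ℝ) (D : Finset X → ℝ) : Prop :=
  (∀ a, 0 < u a) ∧
  (∀ A : Finset X, A.Nonempty → 0 ≤ D A ∧ (D A = 0 ↔ A.card = 1)) ∧
  (∀ A : Finset X, A.Nonempty → ∀ a ∈ A, ρ A a = u a / ((∑ b ∈ A, u b) + D A))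

/-- Axiom A7 (Active-Choice Asymmetry). -/
def A7 (ρ : Finset X → X → ℝ) : Prop :=
  ∀ A : Finset X, A.Nonempty → ∀ a ∈ A, ∀ b ∈ A, a ≠ b → ρ A a ≠ ρ A b

/-- Axiom A8 (Odds-Ratio Proportionality). -/
def A8 (ρ : Finset X → X → ℝ) : Prop :=
  ∀ a b c : X, a ≠ b → b ≠ c → a ≠ c →
    ρ {a, b} a > ρ {a, b} b → ρ {b, c} b > ρ {b, c} c → ρ {a, c} a > ρ {a, c} c →
    ((defer ρ {a, b} / ρ {a, b} b) / (defer ρ {b, c} / ρ {b, c} b)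
        = (defer ρ {a, b} / ρ {a, b} a - defer ρ {a, c} / ρ {a, c} a)
            / (defer ρ {a, c} / ρ {a, c} a)) ∧
    ((defer ρ {a, b} / ρ {a, b} a) / (defer ρ {a, c} / ρ {a, c} a)
        = ((ρ {a, c} a - ρ {a, c} c) / ρ {a, c} a)
            / ((ρ {a, b} a - ρ {a, b} b) / ρ {a, b} a))

/-!
Under a decision-conflict logit, odds against an alternative in a menu are `D A / u a`, and
the choice probabilities in a menu are ordered like the utilities. So A7 says exactly that `u` is
injective, and, on a chain `u c < u b < u a`, the two identities of A8 reduce to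
`D{a,b}·(u a - u b) = D{a,c}·(u a - u c) = D{b,c}·(u b - u c)`. Hence `D{a,b}·|u a - u b|` takes
the same value on any two pairs sharing an element, so (through a common element) on all pairs;
that value is the `λ` of the representation.
-/

section

variable {α : Type*}

theorem odds_conditions_iff {x y z p q r : ℝ} (hx : 0 < x) (hy : 0 < y) (hz : 0 < z)
    (hr : 0 < r) (hrq : r < q) (hqp : q < p) :
    ((x / q) / (z / q) = (x / p - y / p) / (y / p) ∧
        (x / p) / (y / p) = ((p - r) / p) / ((p - q) / p)) ↔
      (x * (p - q) = y * (p - r) ∧ x * (p - q) = z * (q - r)) := by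
  have hq : q ≠ 0 := (hr.trans hrq).ne'
  have hp : p ≠ 0 := (hr.trans (hrq.trans hqp)).ne'
  have hpq : p - q ≠ 0 := (sub_pos.2 hqp).ne'
  have hpr : p - r ≠ 0 := (sub_pos.2 (hrq.trans hqp)).ne'
  rw [div_div_div_cancel_right₀ hq, ← sub_div, div_div_div_cancel_right₀ hp,
    div_div_div_cancel_right₀ hp, div_div_div_cancel_right₀ hp,
    div_eq_div_iff hz.ne' hy.ne', div_eq_div_iff hy.ne' hpq]
  constructor
  · rintro ⟨h₁, h₂⟩
    refine ⟨by linarith, mul_left_cancel₀ hx.ne' ?_⟩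
    linear_combination (p - r) * h₁ + (x + z) * h₂
  · rintro ⟨h₁, h₂⟩
    refine ⟨mul_right_cancel₀ hpr ?_, by linarith⟩
    linear_combination x * h₂ - (x + z) * h₁

namespace IsDCL

variable {ρ : Finset α → α → ℝ} {u : α → ℝ} {D : Finset α → ℝ} {A : Finset α} {a b : α}

theorem denom_pos (h : IsDCL ρ u D) (hA : A.Nonempty) : 0 < ∑ b ∈ A, u b + D A :=
  add_pos_of_pos_of_nonneg (sum_pos (fun b _ => h.1 b) hA) (h.2.1 A hA).1

theorem defer_eq (h : IsDCL ρ u D) (hA : A.Nonempty) :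
    defer ρ A = D A / (∑ b ∈ A, u b + D A) := by
  rw [defer, sum_congr rfl (h.2.2 A hA), ← sum_div, eq_div_iff (h.denom_pos hA).ne',
    sub_mul, one_mul, div_mul_cancel₀ _ (h.denom_pos hA).ne']
  ring

theorem defer_div_choice (h : IsDCL ρ u D) (hA : A.Nonempty) (ha : a ∈ A) :
    defer ρ A / ρ A a = D A / u a := by
  rw [h.defer_eq hA, h.2.2 A hA a ha, div_div_div_cancel_right₀ (h.denom_pos hA).ne']

theorem choice_sub_div_choice (h : IsDCL ρ u D) (hA : A.Nonempty) (ha : a ∈ A) (hb : b ∈ A) :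
    (ρ A a - ρ A b) / ρ A a = (u a - u b) / u a := by
  rw [h.2.2 A hA a ha, h.2.2 A hA b hb, div_sub_div_same,
    div_div_div_cancel_right₀ (h.denom_pos hA).ne']

theorem choice_lt_choice_iff (h : IsDCL ρ u D) (hA : A.Nonempty) (ha : a ∈ A) (hb : b ∈ A) :
    ρ A a < ρ A b ↔ u a < u b := by
  rw [h.2.2 A hA a ha, h.2.2 A hA b hb]
  exact div_lt_div_iff_of_pos_right (h.denom_pos hA)

theorem choice_eq_choice_iff (h : IsDCL ρ u D) (hA : A.Nonempty) (ha : a ∈ A) (hb : b ∈ A) :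
    ρ A a = ρ A b ↔ u a = u b := by
  rw [h.2.2 A hA a ha, h.2.2 A hA b hb]
  exact div_left_inj' (h.denom_pos hA).ne'

theorem A7_iff_injective (h : IsDCL ρ u D) : A7 ρ ↔ Function.Injective u := by
  classical
  refine ⟨fun h7 a b hab => ?_, fun hu A hA a ha b hb hne heq => ?_⟩
  · by_contra hne
    have ha : a ∈ ({a, b} : Finset α) := mem_insert_self a {b}
    have hb : b ∈ ({a, b} : Finset α) := mem_insert_of_mem (mem_singleton_self b)
    exact h7 {a, b} ⟨a, ha⟩ a ha b hb hne ((h.choice_eq_choice_iff ⟨a, ha⟩ ha hb).2 hab)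
  · exact hne (hu ((h.choice_eq_choice_iff hA ha hb).1 heq))

end IsDCL

theorem eq_of_comm_of_eq_of_ne {β : Type*} {f : α → α → β} (hcomm : ∀ x y, f x y = f y x)
    (hshare : ∀ x y z, x ≠ y → x ≠ z → f x y = f x z) {a b c d : α} (hab : a ≠ b)
    (hcd : c ≠ d) : f a b = f c d := by
  by_cases hac : a = c
  · subst hac
    exact hshare a b d hab hcd
  · calc f a b = f a c := hshare a b c hab hac
      _ = f c a := hcomm a c
      _ = f c d := hshare c a d (Ne.symm hac) hcd

variable [DecidableEq α] {ρ : Finset α → α → ℝ} {u : α → ℝ} {D : Finset α → ℝ} {a b c : α}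

def conflictGap (u : α → ℝ) (D : Finset α → ℝ) (a b : α) : ℝ :=
  D {a, b} * |u a - u b|

theorem conflictGap_comm (u : α → ℝ) (D : Finset α → ℝ) (a b : α) :
    conflictGap u D a b = conflictGap u D b a := by
  rw [conflictGap, conflictGap, pair_comm, abs_sub_comm]

theorem conflictGap_of_lt (hba : u b < u a) : conflictGap u D a b = D {a, b} * (u a - u b) := by
  rw [conflictGap, abs_of_pos (sub_pos.2 hba)]

def ReciprocalOnChains (u : α → ℝ) (D : Finset α → ℝ) : Prop :=
  ∀ a b c : α, u c < u b → u b < u a →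
    conflictGap u D a b = conflictGap u D a c ∧ conflictGap u D a b = conflictGap u D b c

namespace IsDCL

theorem conflict_pair_pos (h : IsDCL ρ u D) (hab : a ≠ b) : 0 < D {a, b} := by
  obtain ⟨hD, hD_eq_zero⟩ := h.2.1 {a, b} (insert_nonempty a {b})
  exact hD.lt_of_ne' fun h0 => absurd (hD_eq_zero.1 h0) (by rw [card_pair hab]; norm_num)

theorem conflictGap_pos (h : IsDCL ρ u D) (hu : Function.Injective u) (hab : a ≠ b) :
    0 < conflictGap u D a b :=
  mul_pos (h.conflict_pair_pos hab) (abs_pos.2 (sub_ne_zero.2 (hu.ne hab)))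

theorem A8_iff (h : IsDCL ρ u D) : A8 ρ ↔ ReciprocalOnChains u D := by
  have hne {a b : α} (hba : u b < u a) : a ≠ b := ne_of_apply_ne u hba.ne'
  have odds_fst (a b : α) : defer ρ {a, b} / ρ {a, b} a = D {a, b} / u a :=
    h.defer_div_choice (insert_nonempty a {b}) (mem_insert_self a {b})
  have odds_snd (a b : α) : defer ρ {a, b} / ρ {a, b} b = D {a, b} / u b :=
    h.defer_div_choice (insert_nonempty a {b}) (mem_insert_of_mem (mem_singleton_self b))
  have gap (a b : α) : (ρ {a, b} a - ρ {a, b} b) / ρ {a, b} a = (u a - u b) / u a :=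
    h.choice_sub_div_choice (insert_nonempty a {b}) (mem_insert_self a {b})
      (mem_insert_of_mem (mem_singleton_self b))
  have lt (a b : α) : ρ {a, b} b < ρ {a, b} a ↔ u b < u a :=
    h.choice_lt_choice_iff (insert_nonempty a {b}) (mem_insert_of_mem (mem_singleton_self b))
      (mem_insert_self a {b})
  have key {a b c : α} (hcb : u c < u b) (hba : u b < u a) :=
    odds_conditions_iff (h.conflict_pair_pos (hne hba))
      (h.conflict_pair_pos (hne (hcb.trans hba))) (h.conflict_pair_pos (hne hcb)) (h.1 c) hcb hba
  unfold A8 ReciprocalOnChains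
  simp only [odds_fst, odds_snd, gap, gt_iff_lt, lt]
  constructor
  · intro h8 a b c hcb hba
    rw [conflictGap_of_lt hba, conflictGap_of_lt (hcb.trans hba), conflictGap_of_lt hcb]
    exact (key hcb hba).1 (h8 a b c (hne hba) (hne hcb) (hne (hcb.trans hba)) hba hcb
      (hcb.trans hba))
  · intro hrec a b c _ _ _ hba hcb _
    have := hrec a b c hcb hba
    rw [conflictGap_of_lt hba, conflictGap_of_lt (hcb.trans hba), conflictGap_of_lt hcb] at this
    exact (key hcb hba).2 this

end IsDCL

namespace ReciprocalOnChains

theorem conflictGap_eq_of_ne (hrec : ReciprocalOnChains u D) (hu : Function.Injective u)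
    (hab : a ≠ b) (hac : a ≠ c) : conflictGap u D a b = conflictGap u D a c := by
  by_cases hbc : b = c
  · rw [hbc]
  wlog hcb : u c < u b generalizing b c
  · exact (this hac hab (Ne.symm hbc)
      (lt_of_le_of_ne (not_lt.1 hcb) (hu.ne hbc))).symm
  rcases lt_or_gt_of_ne (hu.ne hab) with hab' | hba
  · rcases lt_or_gt_of_ne (hu.ne hac) with hac' | hca
    · obtain ⟨h₁, h₂⟩ := hrec b c a hac' hcb
      rw [conflictGap_comm u D a b, ← h₁, h₂, conflictGap_comm u D c a]
    · obtain ⟨h₁, h₂⟩ := hrec b a c hca hab'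
      rw [conflictGap_comm u D a b, h₂]
  · exact (hrec a b c hcb hba).1

theorem conflictGap_eq (hrec : ReciprocalOnChains u D) (hu : Function.Injective u)
    {d : α} (hab : a ≠ b) (hcd : c ≠ d) : conflictGap u D a b = conflictGap u D c d :=
  eq_of_comm_of_eq_of_ne (conflictGap_comm u D) (fun _ _ _ => hrec.conflictGap_eq_of_ne hu)
    hab hcd

end ReciprocalOnChains

theorem reciprocalOnChains_of_conflictGap_eq {l : ℝ}
    (hl : ∀ a b : α, a ≠ b → conflictGap u D a b = l) : ReciprocalOnChains u D := by
  intro a b c hcb hba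
  rw [hl a b (ne_of_apply_ne u hba.ne'), hl a c (ne_of_apply_ne u (hcb.trans hba).ne'),
    hl b c (ne_of_apply_ne u hcb.ne')]
  exact ⟨rfl, rfl⟩

end

theorem stmt16_general (hX : 1 < Fintype.card X) (ρ : Finset X → X → ℝ)
    (u : X → ℝ) (D : Finset X → ℝ) (h : IsDCL ρ u D) :
    (Function.Injective u ∧
        ∃ l > 0, ∀ a b : X, a ≠ b → D {a, b} = l / |u a - u b|)
      ↔ (A7 ρ ∧ A8 ρ) := by
  rw [h.A7_iff_injective, h.A8_iff]
  constructor
  · rintro ⟨hu, l, -, hD⟩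
    refine ⟨hu, reciprocalOnChains_of_conflictGap_eq (l := l) fun a b hab => ?_⟩
    rw [conflictGap, hD a b hab, div_mul_cancel₀ l (abs_ne_zero.2 (sub_ne_zero.2 (hu.ne hab)))]
  · rintro ⟨hu, hrec⟩
    obtain ⟨a₀, b₀, hab₀⟩ := Fintype.exists_pair_of_one_lt_card hX
    refine ⟨hu, conflictGap u D a₀ b₀, h.conflictGap_pos hu hab₀, fun a b hab => ?_⟩
    rw [eq_div_iff (abs_ne_zero.2 (sub_ne_zero.2 (hu.ne hab))), ← hrec.conflictGap_eq hu hab hab₀]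
    rfl

/-- A decision-conflict logit is a reciprocal-differences model iff it satisfies
Axioms A7 and A8. -/
theorem stmt16 (hX : 1 < Fintype.card X) (ρ : Finset X → X → ℝ) (hρ : IsRNFC ρ)
    (u : X → ℝ) (D : Finset X → ℝ) (h : IsDCL ρ u D) :
    (Function.Injective u ∧
        ∃ l > 0, ∀ a b : X, a ≠ b → D {a, b} = l / |u a - u b|)
      ↔ (A7 ρ ∧ A8 ρ) :=
  stmt16_general hX ρ u D h
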